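/- arXiv:1901.10334 — 4 statements merged into one kernel-verified Lean document; each statement's English description precedes it below -/
import Mathlib

section
/- Let a ∈ ℝ^n with a_i ≠ 0 for all i, and let Q^{r1} = {(z,β,t) ∈ {0,1}^n × ℝ^n × ℝ₊ : (aᵀβ)² ≤ t, β_i(1−z_i)=0 ∀i}. Then the closed convex hull of Q^{r1} equals {(z,β,t) ∈ [0,1]^n × ℝ^n × ℝ₊ : (aᵀβ)² ≤ t and (aᵀβ)² ≤ t·(∑_i z_i)}. -/
open Matrix BigOperators

private lemma amgm_aux {x y p : ℝ} (hx : 0 ≤ x) (hy : 0 ≤ y) (h : p ^ 2 ≤ x * y) :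
    2 * p ≤ x + y := by
  rcases le_or_gt p 0 with hp | hp
  · linarith
  · nlinarith [sq_nonneg (x - y), sq_nonneg (x + y - 2 * p)]

private lemma mul_forall_aux {x C : ℝ} (h : ∀ r : ℝ, r * x ≤ C) : x = 0 := by
  by_contra hx
  have h1 := h ((C + 1) / x)
  rw [div_mul_cancel₀ _ hx] at h1
  linarith

set_option maxHeartbeats 2000000 in
/-- the closed convex hull of the rank-one mixed-integer set Q^{r1}
equals the set described by the two convex inequalities (aᵀβ)² ≤ t and
(aᵀβ)² ≤ t·(∑ z_i) over the box [0,1]^n with t ≥ 0. -/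
theorem stmt2 {n : ℕ} (a : Fin n → ℝ) (ha : ∀ i, a i ≠ 0) :
    closure (convexHull ℝ
      {q : (Fin n → ℝ) × (Fin n → ℝ) × ℝ |
        (∀ i, q.1 i = 0 ∨ q.1 i = 1) ∧ 0 ≤ q.2.2 ∧
        (a ⬝ᵥ q.2.1) ^ 2 ≤ q.2.2 ∧ (∀ i, q.2.1 i * (1 - q.1 i) = 0)}) =
    {q : (Fin n → ℝ) × (Fin n → ℝ) × ℝ |
        (∀ i, 0 ≤ q.1 i ∧ q.1 i ≤ 1) ∧ 0 ≤ q.2.2 ∧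
        (a ⬝ᵥ q.2.1) ^ 2 ≤ q.2.2 ∧
        (a ⬝ᵥ q.2.1) ^ 2 ≤ q.2.2 * ∑ i, q.1 i} := by
  classical
  set S : Set ((Fin n → ℝ) × (Fin n → ℝ) × ℝ) :=
    {q | (∀ i, q.1 i = 0 ∨ q.1 i = 1) ∧ 0 ≤ q.2.2 ∧
        (a ⬝ᵥ q.2.1) ^ 2 ≤ q.2.2 ∧ (∀ i, q.2.1 i * (1 - q.1 i) = 0)} with hSdef
  set T : Set ((Fin n → ℝ) × (Fin n → ℝ) × ℝ) :=
    {q | (∀ i, 0 ≤ q.1 i ∧ q.1 i ≤ 1) ∧ 0 ≤ q.2.2 ∧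
        (a ⬝ᵥ q.2.1) ^ 2 ≤ q.2.2 ∧
        (a ⬝ᵥ q.2.1) ^ 2 ≤ q.2.2 * ∑ i, q.1 i} with hTdef
  -- T is convex
  have hTconv : Convex ℝ T := by
    rintro ⟨z1, b1, t1⟩ ⟨hz1, ht1, hA1, hB1⟩ ⟨z2, b2, t2⟩ ⟨hz2, ht2, hA2, hB2⟩ c d hc hd hcd
    simp only [Set.mem_setOf_eq, Prod.smul_mk, Prod.mk_add_mk, smul_eq_mul] at *
    set s1 := a ⬝ᵥ b1
    set s2 := a ⬝ᵥ b2
    have hu1 : (0:ℝ) ≤ ∑ i, z1 i := Finset.sum_nonneg fun i _ => (hz1 i).1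
    have hu2 : (0:ℝ) ≤ ∑ i, z2 i := Finset.sum_nonneg fun i _ => (hz2 i).1
    have hsc : a ⬝ᵥ (c • b1 + d • b2) = c * s1 + d * s2 := by
      simp [dotProduct_add, dotProduct_smul, smul_eq_mul, s1, s2]
    have hsum : ∑ i, (c • z1 + d • z2) i = c * ∑ i, z1 i + d * ∑ i, z2 i := by
      simp only [Pi.add_apply, Pi.smul_apply, smul_eq_mul]
      rw [Finset.sum_add_distrib, Finset.mul_sum, Finset.mul_sum]
    refine ⟨fun i => ?_, by positivity, ?_, ?_⟩
    · have p1 := (hz1 i).1; have p2 := (hz2 i).1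
      have q1 := (hz1 i).2; have q2 := (hz2 i).2
      simp only [Pi.add_apply, Pi.smul_apply, smul_eq_mul]
      constructor
      · positivity
      · nlinarith
    · show (a ⬝ᵥ (c • b1 + d • b2)) ^ 2 ≤ c * t1 + d * t2
      rw [hsc]
      nlinarith [mul_nonneg (mul_nonneg hc hd) (sq_nonneg (s1 - s2)),
        mul_nonneg hc (sub_nonneg.2 hA1), mul_nonneg hd (sub_nonneg.2 hA2),
        mul_nonneg (mul_nonneg hc hc) (sub_nonneg.2 hA1),
        mul_nonneg (mul_nonneg hd hd) (sub_nonneg.2 hA2)]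
    · show (a ⬝ᵥ (c • b1 + d • b2)) ^ 2 ≤ (c * t1 + d * t2) * ∑ i, (c • z1 + d • z2) i
      rw [hsc, hsum]
      have key : 2 * (s1 * s2) ≤ t1 * (∑ i, z2 i) + t2 * (∑ i, z1 i) := by
        apply amgm_aux (by positivity) (by positivity)
        calc (s1 * s2) ^ 2 = s1 ^ 2 * s2 ^ 2 := by ring
        _ ≤ (t1 * ∑ i, z1 i) * (t2 * ∑ i, z2 i) :=
            mul_le_mul hB1 hB2 (sq_nonneg _) (by positivity)
        _ = t1 * (∑ i, z2 i) * (t2 * (∑ i, z1 i)) := by ring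
      nlinarith [mul_nonneg (mul_nonneg hc hd) (sub_nonneg.2 key),
        mul_nonneg (mul_nonneg hc hc) (sub_nonneg.2 hB1),
        mul_nonneg (mul_nonneg hd hd) (sub_nonneg.2 hB2)]
  -- T is closed
  have hTclosed : IsClosed T := by
    have c1 : Continuous fun q : (Fin n → ℝ) × (Fin n → ℝ) × ℝ => a ⬝ᵥ q.2.1 := by
      unfold dotProduct
      exact continuous_finset_sum _ fun i _ =>
        continuous_const.mul ((continuous_apply i).comp (continuous_fst.comp continuous_snd))
    have c2 : Continuous fun q : (Fin n → ℝ) × (Fin n → ℝ) × ℝ => q.2.2 :=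
      continuous_snd.comp continuous_snd
    have c3 : ∀ i, Continuous fun q : (Fin n → ℝ) × (Fin n → ℝ) × ℝ => q.1 i := fun i =>
      (continuous_apply i).comp continuous_fst
    have : T = (⋂ i, ({q | 0 ≤ q.1 i} ∩ {q | q.1 i ≤ 1})) ∩
        ({q | 0 ≤ q.2.2} ∩ ({q | (a ⬝ᵥ q.2.1) ^ 2 ≤ q.2.2} ∩
          {q | (a ⬝ᵥ q.2.1) ^ 2 ≤ q.2.2 * ∑ i, q.1 i})) := by
      ext q
      simp only [hTdef, Set.mem_setOf_eq, Set.mem_inter_iff, Set.mem_iInter, forall_and]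
    rw [this]
    refine IsClosed.inter (isClosed_iInter fun i => IsClosed.inter ?_ ?_)
      (IsClosed.inter ?_ (IsClosed.inter ?_ ?_))
    · exact isClosed_le continuous_const (c3 i)
    · exact isClosed_le (c3 i) continuous_const
    · exact isClosed_le continuous_const c2
    · exact isClosed_le (c1.pow 2) c2
    · exact isClosed_le (c1.pow 2)
        (c2.mul (continuous_finset_sum _ fun i _ => c3 i))
  -- S ⊆ T
  have hST : S ⊆ T := by
    rintro ⟨z, β, t⟩ ⟨hz01, ht, hst, hcomp⟩
    dsimp only at hz01 ht hst hcomp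
    have hz : ∀ i, 0 ≤ z i ∧ z i ≤ 1 := fun i => by
      rcases hz01 i with h | h <;> rw [h] <;> norm_num
    refine ⟨hz, ht, hst, ?_⟩
    by_cases hone : ∃ i, z i = 1
    · obtain ⟨i0, hi0⟩ := hone
      have h1 : (1:ℝ) ≤ ∑ i, z i := by
        calc (1:ℝ) = z i0 := hi0.symm
        _ ≤ ∑ i, z i := Finset.single_le_sum (fun i _ => (hz i).1) (Finset.mem_univ i0)
      calc (a ⬝ᵥ β) ^ 2 ≤ t := hst
      _ = t * 1 := by ring
      _ ≤ t * ∑ i, z i := by nlinarith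
    · push_neg at hone
      have hz0 : ∀ i, z i = 0 := fun i => (hz01 i).resolve_right (hone i)
      have hb0 : β = 0 := by
        funext i
        have := hcomp i
        rw [hz0 i] at this
        simpa using this
      have hsum0 : ∑ x, z x = (0:ℝ) := Finset.sum_eq_zero fun i _ => hz0 i
      simp [hb0, hsum0]
  refine Set.Subset.antisymm (closure_minimal (convexHull_min hST hTconv) hTclosed) ?_
  -- hard direction : T ⊆ closure (convexHull ℝ S)
  rintro ⟨z, β, t⟩ hxT
  obtain ⟨hz, ht, h1, h2⟩ := hxT
  dsimp only at hz ht h1 h2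
  rcases isEmpty_or_nonempty (Fin n) with hE | hNE
  · -- trivial case n = 0
    apply subset_closure
    apply subset_convexHull
    exact ⟨fun i => hE.elim i, ht, h1, fun i => hE.elim i⟩
  by_contra hxc
  obtain ⟨f, C, hfS, hfx⟩ := geometric_hahn_banach_closed_point
    ((convex_convexHull ℝ S).closure) isClosed_closure hxc
  have hfS' : ∀ p ∈ S, f p ≤ C := fun p hp =>
    (hfS p (subset_closure (subset_convexHull ℝ S hp))).le
  set α : Fin n → ℝ := fun i => f (Pi.single i 1, 0, 0) with hα
  set g : Fin n → ℝ := fun i => f (0, Pi.single i 1, 0) with hg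
  set τ : ℝ := f (0, 0, 1) with hτdef
  -- decomposition of f
  have hf : ∀ q : (Fin n → ℝ) × (Fin n → ℝ) × ℝ,
      f q = (∑ i, α i * q.1 i) + ((∑ i, g i * q.2.1 i) + τ * q.2.2) := by
    intro q
    have e1 : ∀ w : Fin n → ℝ, f (w, 0, 0) = ∑ i, α i * w i := by
      intro w
      have hw : ((w, 0, 0) : (Fin n → ℝ) × (Fin n → ℝ) × ℝ)
          = ∑ i : Fin n, (w i) • ((Pi.single i 1, 0, 0) : (Fin n → ℝ) × (Fin n → ℝ) × ℝ) := by
        refine Prod.ext ?_ (Prod.ext ?_ ?_)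
        · rw [Prod.fst_sum]
          have := Finset.univ_sum_single w
          rw [← this]
          congr 1
          funext i
          simp [← Pi.single_smul, smul_eq_mul]
        · rw [Prod.snd_sum, Prod.fst_sum]
          simp
        · rw [Prod.snd_sum, Prod.snd_sum]
          simp
      rw [hw, map_sum]
      exact Finset.sum_congr rfl fun i _ => by rw [f.map_smul]; simp [hα, mul_comm]
    have e2 : ∀ w : Fin n → ℝ, f (0, w, 0) = ∑ i, g i * w i := by
      intro w
      have hw : ((0, w, 0) : (Fin n → ℝ) × (Fin n → ℝ) × ℝ)
          = ∑ i : Fin n, (w i) • ((0, Pi.single i 1, 0) : (Fin n → ℝ) × (Fin n → ℝ) × ℝ) := by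
        refine Prod.ext ?_ (Prod.ext ?_ ?_)
        · rw [Prod.fst_sum]; simp
        · rw [Prod.snd_sum, Prod.fst_sum]
          have := Finset.univ_sum_single w
          rw [← this]
          congr 1
          funext i
          simp [← Pi.single_smul, smul_eq_mul]
        · rw [Prod.snd_sum, Prod.snd_sum]; simp
      rw [hw, map_sum]
      exact Finset.sum_congr rfl fun i _ => by rw [f.map_smul]; simp [hg, mul_comm]
    have e3 : f (0, 0, q.2.2) = τ * q.2.2 := by
      have : ((0, 0, q.2.2) : (Fin n → ℝ) × (Fin n → ℝ) × ℝ)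
          = q.2.2 • ((0, 0, 1) : (Fin n → ℝ) × (Fin n → ℝ) × ℝ) := by
        refine Prod.ext ?_ (Prod.ext ?_ ?_) <;> simp
      rw [this, f.map_smul, smul_eq_mul, hτdef, mul_comm]
    have hq : q = (q.1, 0, 0) + ((0, q.2.1, 0) + (0, 0, q.2.2)) := by
      refine Prod.ext ?_ (Prod.ext ?_ ?_) <;> simp
    calc f q = f ((q.1, 0, 0) + ((0, q.2.1, 0) + (0, 0, q.2.2))) := by rw [← hq]
    _ = f (q.1, 0, 0) + (f (0, q.2.1, 0) + f (0, 0, q.2.2)) := by rw [map_add, map_add]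
    _ = _ := by rw [e1, e2, e3]
  -- basic facts
  have hC0 : 0 < C := by
    have h0 := hfS 0 (subset_closure (subset_convexHull ℝ S
      ⟨fun i => Or.inl rfl, le_refl 0, by simp, fun i => by simp⟩))
    simpa using h0
  have hτ : τ ≤ 0 := by
    by_contra hτpos
    push_neg at hτpos
    have hCτ : 0 < (C + 1) / τ := div_pos (by linarith) hτpos
    have hmem : ((0, 0, (C + 1) / τ) : (Fin n → ℝ) × (Fin n → ℝ) × ℝ) ∈ S := by
      refine ⟨fun i => Or.inl rfl, hCτ.le, by simpa using hCτ.le, fun i => by simp⟩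
    have hh := hfS' _ hmem
    rw [hf] at hh
    dsimp only at hh
    simp only [Pi.zero_apply, mul_zero, zero_mul, Finset.sum_const_zero, zero_add] at hh
    rw [mul_div_cancel₀ _ (ne_of_gt hτpos)] at hh
    linarith
  -- the kernel property : g vanishes on the orthogonal complement of a
  have haa : 0 < a ⬝ᵥ a := by
    unfold dotProduct
    exact Finset.sum_pos (fun i _ => mul_self_pos.2 (ha i)) Finset.univ_nonempty
  have hker : ∀ w : Fin n → ℝ, a ⬝ᵥ w = 0 → (∑ i, g i * w i) = 0 := by
    intro w hw
    apply mul_forall_aux (C := C - ∑ i, α i)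
    intro r
    have hmem : ((fun _ => 1, r • w, 0) : (Fin n → ℝ) × (Fin n → ℝ) × ℝ) ∈ S := by
      refine ⟨fun i => Or.inr rfl, le_refl 0, ?_, fun i => by simp⟩
      simp [dotProduct_smul, hw]
    have hle := hfS' _ hmem
    rw [hf] at hle
    dsimp only at hle
    simp only [mul_one, mul_zero, add_zero, Pi.smul_apply, smul_eq_mul] at hle
    have hre : ∑ i, g i * (r * w i) = r * ∑ i, g i * w i := by
      rw [Finset.mul_sum]; exact Finset.sum_congr rfl fun i _ => by ring
    rw [hre] at hle
    linarith
  set μ : ℝ := (∑ i, g i * a i) / (a ⬝ᵥ a) with hμdef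
  have hμ : ∀ w : Fin n → ℝ, (∑ i, g i * w i) = μ * (a ⬝ᵥ w) := by
    intro w
    set c : ℝ := (a ⬝ᵥ w) / (a ⬝ᵥ a) with hcdef
    have hw0 : a ⬝ᵥ (w - c • a) = 0 := by
      rw [dotProduct_sub, dotProduct_smul, smul_eq_mul, hcdef,
        div_mul_cancel₀ _ (ne_of_gt haa)]
      ring
    have hk := hker _ hw0
    have hexp : ∑ i, g i * (w - c • a) i
        = (∑ i, g i * w i) - c * ∑ i, g i * a i := by
      rw [Finset.mul_sum, ← Finset.sum_sub_distrib]
      exact Finset.sum_congr rfl fun i _ => by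
        simp only [Pi.sub_apply, Pi.smul_apply, smul_eq_mul]; ring
    rw [hexp] at hk
    have : ∑ i, g i * w i = c * ∑ i, g i * a i := by linarith
    rw [this, hcdef, hμdef]
    ring
  -- main inequality family from indicator points
  have hK : ∀ K : Finset (Fin n), ∀ i0 ∈ K, ∀ r : ℝ,
      (∑ i ∈ K, α i) + (μ * r + τ * r ^ 2) ≤ C := by
    intro K i0 hi0 r
    have hmem : ((fun i => if i ∈ K then (1:ℝ) else 0, Pi.single i0 (r / a i0), r ^ 2) :
        (Fin n → ℝ) × (Fin n → ℝ) × ℝ) ∈ S := by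
      refine ⟨fun i => by by_cases h : i ∈ K <;> simp [h], sq_nonneg r, ?_, ?_⟩
      · show (a ⬝ᵥ (Pi.single i0 (r / a i0) : Fin n → ℝ)) ^ 2 ≤ r ^ 2
        rw [dotProduct_single a (r / a i0) i0, mul_comm, div_mul_cancel₀ _ (ha i0)]
      · intro i
        by_cases h : i = i0
        · subst h; simp [hi0]
        · show (Pi.single i0 (r / a i0) : Fin n → ℝ) i * _ = 0
          rw [Pi.single_eq_of_ne h, zero_mul]
    have hle := hfS' _ hmem
    rw [hf] at hle
    dsimp only at hle
    have e1 : ∑ i, α i * (if i ∈ K then (1:ℝ) else 0) = ∑ i ∈ K, α i := by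
      rw [← Finset.univ_inter K, ← Finset.sum_ite_mem]
      exact Finset.sum_congr rfl fun i _ => by by_cases h : i ∈ K <;> simp [h]
    have e2 : ∑ i, g i * (Pi.single i0 (r / a i0) : Fin n → ℝ) i = μ * r := by
      rw [hμ ((Pi.single i0 (r / a i0) : Fin n → ℝ)),
        dotProduct_single a (r / a i0) i0,
        mul_comm (a i0), div_mul_cancel₀ _ (ha i0)]
    rw [e1, e2] at hle
    linarith
  -- now derive the contradiction
  set s : ℝ := a ⬝ᵥ β with hsdef
  set u : ℝ := ∑ i, z i with hudef
  have hzn : ∀ i, 0 ≤ z i := fun i => (hz i).1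
  have hz1 : ∀ i, z i ≤ 1 := fun i => (hz i).2
  have hun : 0 ≤ u := Finset.sum_nonneg fun i _ => hzn i
  obtain ⟨istar, -, histar⟩ := Finset.exists_max_image Finset.univ α Finset.univ_nonempty
  have histar' : ∀ i, α i ≤ α istar := fun i => histar i (Finset.mem_univ i)
  have hfxval : f (z, β, t) = (∑ i, α i * z i) + ((μ * s) + τ * t) := by
    have hh := hf (z, β, t)
    dsimp only at hh
    rw [hμ β] at hh
    rw [hh, ← hsdef]
  have hgoal : f (z, β, t) ≤ C := by
    rw [hfxval]
    rcases le_or_gt 1 u with hu1 | hu1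
    · -- case u ≥ 1
      have hτt : τ * t ≤ τ * s ^ 2 := mul_le_mul_of_nonpos_left h1 hτ
      by_cases hpos : ∃ i, 0 < α i
      · set Kp : Finset (Fin n) := Finset.univ.filter (fun i => 0 < α i) with hKp
        obtain ⟨i0, hi0⟩ := hpos
        have hi0' : i0 ∈ Kp := by simp [hKp, hi0]
        have hk := hK Kp i0 hi0' s
        have hb : ∑ i, α i * z i ≤ ∑ i ∈ Kp, α i := by
          calc ∑ i, α i * z i ≤ ∑ i, (if 0 < α i then α i else 0) := by
                apply Finset.sum_le_sum
                intro i _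
                by_cases h : 0 < α i
                · simpa [h] using mul_le_of_le_one_right h.le (hz1 i)
                · push_neg at h
                  rw [if_neg (not_lt.2 h)]
                  exact mul_nonpos_of_nonpos_of_nonneg h (hzn i)
          _ = ∑ i ∈ Kp, α i := by
                rw [hKp, Finset.sum_filter]
        linarith
      · push_neg at hpos
        have hk := hK {istar} istar (Finset.mem_singleton_self istar) s
        rw [Finset.sum_singleton] at hk
        have hb : ∑ i, α i * z i ≤ α istar := by
          calc ∑ i, α i * z i ≤ ∑ i, α istar * z i :=
                Finset.sum_le_sum fun i _ => mul_le_mul_of_nonneg_right (histar' i) (hzn i)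
          _ = α istar * u := by rw [← Finset.mul_sum]
          _ ≤ α istar * 1 := mul_le_mul_of_nonpos_left hu1 (hpos istar)
          _ = α istar := mul_one _
        linarith
    · -- case u < 1
      rcases le_or_gt u 0 with hu0 | hu0
      · have huz : u = 0 := le_antisymm hu0 hun
        have hz0 : ∀ i, z i = 0 := by
          have := (Finset.sum_eq_zero_iff_of_nonneg (fun i _ => hzn i)).1 (hudef ▸ huz)
          exact fun i => this i (Finset.mem_univ i)
        have hs0 : s = 0 := by
          have : s ^ 2 ≤ 0 := by rw [huz, mul_zero] at h2; exact h2
          nlinarith [sq_nonneg s]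
        have hsum0 : ∑ i, α i * z i = 0 :=
          Finset.sum_eq_zero fun i _ => by rw [hz0 i, mul_zero]
        rw [hsum0, hs0]
        have : τ * t ≤ 0 := mul_nonpos_of_nonpos_of_nonneg hτ ht
        linarith
      · -- 0 < u < 1
        have hk := hK {istar} istar (Finset.mem_singleton_self istar) (s / u)
        rw [Finset.sum_singleton] at hk
        have hu0' : u ≠ 0 := ne_of_gt hu0
        have hk2 : u * α istar + (μ * s + τ * (s ^ 2 / u)) ≤ u * C := by
          have hmul := mul_le_mul_of_nonneg_left hk (le_of_lt hu0)
          calc u * α istar + (μ * s + τ * (s ^ 2 / u))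
              = u * (α istar + (μ * (s / u) + τ * (s / u) ^ 2)) := by
                field_simp
          _ ≤ u * C := hmul
        have hb : ∑ i, α i * z i ≤ u * α istar := by
          calc ∑ i, α i * z i ≤ ∑ i, α istar * z i :=
                Finset.sum_le_sum fun i _ => mul_le_mul_of_nonneg_right (histar' i) (hzn i)
          _ = α istar * u := by rw [← Finset.mul_sum]
          _ = u * α istar := mul_comm _ _
        have hτt : τ * t ≤ τ * (s ^ 2 / u) := by
          apply mul_le_mul_of_nonpos_left _ hτ
          rw [div_le_iff₀ hu0]
          exact h2
        have huC : u * C ≤ C := by nlinarith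
        linarith
  linarith [hfx, hgoal]
end

section
/- Let a ∈ ℝ^n with all entries nonzero. The set C = {(z,β,t) ∈ [0,1]^n × ℝ^n × ℝ₊ : (aᵀβ)²/min{1, ∑_i z_i} ≤ t} (convention 0/0=0) is convex, and it is conic quadratic representable: (z,β,t) ∈ C if and only if there exists w ∈ ℝ with 0 ≤ w ≤ 1, w ≤ ∑_i z_i, and (aᵀβ)² ≤ t·w. -/
open Matrix BigOperators

lemma aux_iff (x S t : ℝ) (hS : 0 ≤ S) (ht : 0 ≤ t) :
    ((S = 0 → x = 0) ∧ x ^ 2 / min 1 S ≤ t) ↔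
      ∃ w : ℝ, 0 ≤ w ∧ w ≤ 1 ∧ w ≤ S ∧ x ^ 2 ≤ t * w := by
  constructor
  · rintro ⟨h0, hdiv⟩
    rcases eq_or_lt_of_le hS with hS0 | hSpos
    · exact ⟨0, le_refl 0, zero_le_one, by rw [← hS0], by
        rw [h0 hS0.symm]; simp⟩
    · have hm : 0 < min 1 S := lt_min one_pos hSpos
      refine ⟨min 1 S, hm.le, min_le_left _ _, min_le_right _ _, ?_⟩
      calc x ^ 2 = x ^ 2 / min 1 S * min 1 S := by field_simp
        _ ≤ t * min 1 S := mul_le_mul_of_nonneg_right hdiv hm.le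
  · rintro ⟨w, hw0, hw1, hwS, hxw⟩
    rcases eq_or_lt_of_le hS with hS0 | hSpos
    · have hw : w = 0 := le_antisymm (by rw [← hS0] at hwS; exact hwS) hw0
      have hx2 : x ^ 2 ≤ 0 := by rw [hw, mul_zero] at hxw; exact hxw
      have hx : x = 0 := pow_eq_zero_iff (n := 2) (by norm_num) |>.mp
        (le_antisymm hx2 (sq_nonneg x))
      exact ⟨fun _ => hx, by rw [hx]; simpa using ht⟩
    · have hm : 0 < min 1 S := lt_min one_pos hSpos
      have hwm : w ≤ min 1 S := le_min hw1 hwS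
      refine ⟨fun h => absurd h hSpos.ne', ?_⟩
      rw [div_le_iff₀ hm]
      calc x ^ 2 ≤ t * w := hxw
        _ ≤ t * min 1 S := mul_le_mul_of_nonneg_left hwm ht

lemma socp_convex (x1 x2 t1 t2 w1 w2 c d : ℝ) (ht1 : 0 ≤ t1) (ht2 : 0 ≤ t2)
    (hw1 : 0 ≤ w1) (hw2 : 0 ≤ w2) (h1 : x1 ^ 2 ≤ t1 * w1) (h2 : x2 ^ 2 ≤ t2 * w2)
    (hc : 0 ≤ c) (hd : 0 ≤ d) (hcd : c + d = 1) :
    (c * x1 + d * x2) ^ 2 ≤ (c * t1 + d * t2) * (c * w1 + d * w2) := by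
  have key : 2 * (x1 * x2) ≤ t1 * w2 + t2 * w1 := by
    have h1' : |x1| ≤ Real.sqrt (t1 * w1) := by
      rw [← Real.sqrt_sq_eq_abs]; exact Real.sqrt_le_sqrt h1
    have h2' : |x2| ≤ Real.sqrt (t2 * w2) := by
      rw [← Real.sqrt_sq_eq_abs]; exact Real.sqrt_le_sqrt h2
    have hmul : |x1| * |x2| ≤ Real.sqrt (t1 * w1) * Real.sqrt (t2 * w2) :=
      mul_le_mul h1' h2' (abs_nonneg _) (Real.sqrt_nonneg _)
    rw [← Real.sqrt_mul (mul_nonneg ht1 hw1)] at hmul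
    have h3 : Real.sqrt (t1 * w1 * (t2 * w2)) ≤ (t1 * w2 + t2 * w1) / 2 := by
      have hle : t1 * w1 * (t2 * w2) ≤ ((t1 * w2 + t2 * w1) / 2) ^ 2 := by
        nlinarith [sq_nonneg (t1 * w2 - t2 * w1)]
      calc Real.sqrt (t1 * w1 * (t2 * w2)) ≤ Real.sqrt (((t1 * w2 + t2 * w1) / 2) ^ 2) :=
            Real.sqrt_le_sqrt hle
        _ = (t1 * w2 + t2 * w1) / 2 := Real.sqrt_sq (by positivity)
    have h4 : x1 * x2 ≤ |x1| * |x2| := by rw [← abs_mul]; exact le_abs_self _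
    linarith
  nlinarith [mul_nonneg (mul_nonneg hc hc) (sub_nonneg.2 h1),
    mul_nonneg (mul_nonneg hd hd) (sub_nonneg.2 h2),
    mul_nonneg (mul_nonneg hc hd) (sub_nonneg.2 key)]

/-- the set C defined by the fractional constraint
(aᵀβ)²/min{1,∑ z_i} ≤ t (conventions 0/0 = 0, s/0 = ∞, encoded by requiring
aᵀβ = 0 when ∑ z_i = 0) is convex and conic quadratic representable via an
auxiliary variable w. -/
theorem stmt3 {n : ℕ} (a : Fin n → ℝ) (ha : ∀ i, a i ≠ 0) :
    Convex ℝ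
      {q : (Fin n → ℝ) × (Fin n → ℝ) × ℝ |
        (∀ i, 0 ≤ q.1 i ∧ q.1 i ≤ 1) ∧ 0 ≤ q.2.2 ∧
        ((∑ i, q.1 i) = 0 → a ⬝ᵥ q.2.1 = 0) ∧
        (a ⬝ᵥ q.2.1) ^ 2 / min 1 (∑ i, q.1 i) ≤ q.2.2} ∧
    ∀ z β : Fin n → ℝ, ∀ t : ℝ,
      ((∀ i, 0 ≤ z i ∧ z i ≤ 1) ∧ 0 ≤ t ∧
        ((∑ i, z i) = 0 → a ⬝ᵥ β = 0) ∧
        (a ⬝ᵥ β) ^ 2 / min 1 (∑ i, z i) ≤ t)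
      ↔ ((∀ i, 0 ≤ z i ∧ z i ≤ 1) ∧ 0 ≤ t ∧
          ∃ w : ℝ, 0 ≤ w ∧ w ≤ 1 ∧ w ≤ ∑ i, z i ∧ (a ⬝ᵥ β) ^ 2 ≤ t * w) := by
  have sum_nonneg' : ∀ z : Fin n → ℝ, (∀ i, 0 ≤ z i ∧ z i ≤ 1) → 0 ≤ ∑ i, z i :=
    fun z hz => Finset.sum_nonneg fun i _ => (hz i).1
  constructor
  · rintro ⟨z1, β1, t1⟩ h1 ⟨z2, β2, t2⟩ h2 c d hc hd hcd
    simp only [Set.mem_setOf_eq] at h1 h2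
    obtain ⟨hz1, ht1, h01, hdiv1⟩ := h1
    obtain ⟨hz2, ht2, h02, hdiv2⟩ := h2
    obtain ⟨w1, hw1⟩ := (aux_iff _ _ _ (sum_nonneg' _ hz1) ht1).mp ⟨h01, hdiv1⟩
    obtain ⟨w2, hw2⟩ := (aux_iff _ _ _ (sum_nonneg' _ hz2) ht2).mp ⟨h02, hdiv2⟩
    have hzc : ∀ i, 0 ≤ c * z1 i + d * z2 i ∧ c * z1 i + d * z2 i ≤ 1 := by
      intro i
      constructor
      · exact add_nonneg (mul_nonneg hc (hz1 i).1) (mul_nonneg hd (hz2 i).1)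
      · calc c * z1 i + d * z2 i ≤ c * 1 + d * 1 := by
              gcongr; exacts [(hz1 i).2, (hz2 i).2]
          _ = 1 := by linarith
    have htc : (0:ℝ) ≤ c * t1 + d * t2 := add_nonneg (mul_nonneg hc ht1) (mul_nonneg hd ht2)
    have hcomp : (c • (z1, β1, t1) + d • (z2, β2, t2) :
        (Fin n → ℝ) × (Fin n → ℝ) × ℝ) =
        (fun i => c * z1 i + d * z2 i, fun i => c * β1 i + d * β2 i, c * t1 + d * t2) := by
      refine Prod.ext ?_ (Prod.ext ?_ ?_) <;> simp [Prod.smul_fst, Prod.smul_snd] <;> rfl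
    rw [Set.mem_setOf_eq, hcomp]
    have hdot : a ⬝ᵥ (fun i => c * β1 i + d * β2 i) = c * (a ⬝ᵥ β1) + d * (a ⬝ᵥ β2) := by
      simp [dotProduct, Finset.mul_sum, ← Finset.sum_add_distrib]
      congr 1; ext i; ring
    have hsum : (∑ i, (c * z1 i + d * z2 i)) = c * (∑ i, z1 i) + d * (∑ i, z2 i) := by
      rw [Finset.sum_add_distrib, ← Finset.mul_sum, ← Finset.mul_sum]
    have hSc : 0 ≤ ∑ i, (c * z1 i + d * z2 i) := sum_nonneg' _ hzc
    refine ⟨hzc, htc, ?_⟩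
    rw [hdot, hsum]
    apply (aux_iff _ _ _ (by rw [← hsum]; exact hSc) htc).mpr
    obtain ⟨hw10, hw11, hw1S, hx1⟩ := hw1
    obtain ⟨hw20, hw21, hw2S, hx2⟩ := hw2
    refine ⟨c * w1 + d * w2, add_nonneg (mul_nonneg hc hw10) (mul_nonneg hd hw20), ?_, ?_, ?_⟩
    · calc c * w1 + d * w2 ≤ c * 1 + d * 1 := by gcongr
        _ = 1 := by linarith
    · gcongr
    · exact socp_convex _ _ _ _ _ _ _ _ ht1 ht2 hw10 hw20 hx1 hx2 hc hd hcd
  · intro z β t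
    constructor
    · rintro ⟨hz, ht, h0, hdiv⟩
      exact ⟨hz, ht, (aux_iff _ _ _ (sum_nonneg' _ hz) ht).mp ⟨h0, hdiv⟩⟩
    · rintro ⟨hz, ht, hw⟩
      have := (aux_iff _ _ _ (sum_nonneg' _ hz) ht).mpr hw
      exact ⟨hz, ht, this.1, this.2⟩
end

section
/- Let 𝒫 be a downward-closed family of subsets of {1,…,p} (U ⊆ V ∈ 𝒫 implies U ∈ 𝒫). Then in the maximization defining φ_𝒫(z,β) — maximize βᵀRβ + ∑_{T∈𝒫} βᵀA_Tβ / min{1, z(T)} over PSD matrices A_T supported on T and PSD R with ∑_T A_T + R = XᵀX + λI — there exists an optimal solution in which every A_T is a rank-one matrix. -/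
/-!
The feasible set is compact: every `A_T` lies between `0` and `M = XᵀX + λI` in the Loewner
order, which bounds its entries. The objective is continuous, so a maximiser exists. In a
maximiser, replace each `A_T` by `c cᵀ` with `c = A_T β / √(βᵀ A_T β)`: this keeps `βᵀ A_T β`,
keeps the support inside `T`, and `A_T - c cᵀ` is positive semidefinite by Cauchy–Schwarz for
the semi-inner product `xᵀ A_T y`. Moving `A_T - c cᵀ` into `R` changes neither the constraint
nor `βᵀ R β`, hence not the objective.
-/

open Matrix

namespace Matrix

variable {m : Type*}

def SupportedOn {α : Type*} [Zero α] (N : Matrix m m α) (T : Finset m) : Prop :=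
  ∀ i j, (i ∉ T ∨ j ∉ T) → N i j = 0

theorem isClosed_setOf_supportedOn {α : Type*} [Zero α] [TopologicalSpace α] [T2Space α]
    (T : Finset m) : IsClosed {N : Matrix m m α | N.SupportedOn T} := by
  simp only [SupportedOn, Set.ofPred_forall]
  exact isClosed_iInter fun i => isClosed_iInter fun j => isClosed_iInter fun _ =>
    isClosed_eq (continuous_id.matrix_elem i j) continuous_const

variable [Fintype m]

theorem PosSemidef.dotProduct_mulVec_sq_le {N : Matrix m m ℝ} (hN : N.PosSemidef)
    (x y : m → ℝ) : (x ⬝ᵥ N *ᵥ y) ^ 2 ≤ (x ⬝ᵥ N *ᵥ x) * (y ⬝ᵥ N *ᵥ y) := by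
  let _ := N.toSeminormedAddCommGroup hN
  let _ := N.toInnerProductSpace hN
  -- the semi-inner product induced by `N` is `⟪u, v⟫ = (N *ᵥ v) ⬝ᵥ star u`
  have inner_eq (u v : m → ℝ) : inner ℝ u v = u ⬝ᵥ N *ᵥ v := by
    rw [dotProduct_comm]; rfl
  rw [sq, ← inner_eq, ← inner_eq, ← inner_eq]
  exact real_inner_mul_inner_self_le x y

theorem PosSemidef.sq_apply_le [DecidableEq m] {N : Matrix m m ℝ} (hN : N.PosSemidef) (i j : m) :
    N i j ^ 2 ≤ N i i * N j j := by
  simpa using hN.dotProduct_mulVec_sq_le (Pi.single i 1) (Pi.single j 1)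

theorem isClosed_setOf_posSemidef : IsClosed {N : Matrix m m ℝ | N.PosSemidef} := by
  simp only [posSemidef_iff_dotProduct_mulVec, Set.ofPred_and, Set.ofPred_forall]
  exact (isClosed_eq (by fun_prop) continuous_id).inter
    (isClosed_iInter fun x => isClosed_le continuous_const (by fun_prop))

theorem isCompact_setOf_posSemidef_and_posSemidef_sub (M : Matrix m m ℝ) :
    IsCompact {N : Matrix m m ℝ | N.PosSemidef ∧ (M - N).PosSemidef} := by
  classical
  set B := M.trace
  have hbox : IsCompact (Set.univ.pi fun _ : m => Set.univ.pi fun _ : m => Set.Icc (-B) B) :=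
    isCompact_univ_pi fun _ => isCompact_univ_pi fun _ => isCompact_Icc
  refine hbox.of_isClosed_subset
    (isClosed_setOf_posSemidef.inter (isClosed_setOf_posSemidef.preimage (by fun_prop))) ?_
  rintro N ⟨hN, hMN⟩ i - j -
  have hM : M.PosSemidef := add_sub_cancel N M ▸ hN.add hMN
  have hdiag (k : m) : N k k ≤ B := calc
    N k k ≤ M k k := sub_nonneg.mp hMN.diag_nonneg
    _ ≤ B := Finset.single_le_sum (f := fun k => M k k) (fun k _ => hM.diag_nonneg)
      (Finset.mem_univ k)
  have hsq : N i j ^ 2 ≤ B ^ 2 := calc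
    N i j ^ 2 ≤ N i i * N j j := hN.sq_apply_le i j
    _ ≤ B * B := mul_le_mul (hdiag i) (hdiag j) hN.diag_nonneg hM.trace_nonneg
    _ = B ^ 2 := (sq B).symm
  exact abs_le_of_sq_le_sq' hsq hM.trace_nonneg

theorem dotProduct_vecMulVec_mulVec (c x y : m → ℝ) :
    x ⬝ᵥ vecMulVec c c *ᵥ y = (x ⬝ᵥ c) * (c ⬝ᵥ y) := by
  simp [vecMulVec_mulVec, dotProduct_comm x c, mul_comm]

/-- `c cᵀ = N β βᵀ N / (βᵀ N β)`; when `βᵀ N β = 0` the factor is `0`, since `0⁻¹ = 0`. -/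
noncomputable def rankOneFactor (N : Matrix m m ℝ) (β : m → ℝ) : m → ℝ :=
  (√(β ⬝ᵥ N *ᵥ β))⁻¹ • N *ᵥ β

theorem PosSemidef.dotProduct_rankOneFactor_sq {N : Matrix m m ℝ} (hN : N.PosSemidef)
    (β x : m → ℝ) : (x ⬝ᵥ rankOneFactor N β) ^ 2 = (x ⬝ᵥ N *ᵥ β) ^ 2 / (β ⬝ᵥ N *ᵥ β) := by
  have hq : 0 ≤ β ⬝ᵥ N *ᵥ β := by simpa using hN.dotProduct_mulVec_nonneg β
  rw [rankOneFactor, dotProduct_smul, smul_eq_mul, mul_pow, inv_pow, Real.sq_sqrt hq,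
    inv_mul_eq_div]

theorem PosSemidef.dotProduct_vecMulVec_rankOneFactor {N : Matrix m m ℝ} (hN : N.PosSemidef)
    (β : m → ℝ) :
    β ⬝ᵥ vecMulVec (rankOneFactor N β) (rankOneFactor N β) *ᵥ β = β ⬝ᵥ N *ᵥ β := by
  rw [dotProduct_vecMulVec_mulVec, dotProduct_comm _ β, ← sq,
    hN.dotProduct_rankOneFactor_sq, sq, mul_self_div_self]

theorem PosSemidef.posSemidef_sub_vecMulVec_rankOneFactor {N : Matrix m m ℝ}
    (hN : N.PosSemidef) (β : m → ℝ) :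
    (N - vecMulVec (rankOneFactor N β) (rankOneFactor N β)).PosSemidef := by
  set c := rankOneFactor N β
  have hc : (vecMulVec c c).IsHermitian := by
    simpa using (posSemidef_vecMulVec_self_star c).isHermitian
  refine .of_dotProduct_mulVec_nonneg (hN.isHermitian.sub hc) fun x => ?_
  rw [star_trivial, sub_mulVec, dotProduct_sub, sub_nonneg, dotProduct_vecMulVec_mulVec,
    dotProduct_comm c, ← sq, hN.dotProduct_rankOneFactor_sq]
  exact div_le_of_le_mul₀ (by simpa using hN.dotProduct_mulVec_nonneg β)
    (by simpa using hN.dotProduct_mulVec_nonneg x) (hN.dotProduct_mulVec_sq_le x β)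

theorem rankOneFactor_apply_eq_zero {N : Matrix m m ℝ} (β : m → ℝ) {i : m}
    (hi : ∀ j, N i j = 0) : rankOneFactor N β i = 0 := by
  simp [rankOneFactor, mulVec, dotProduct, hi]

end Matrix

section Decomposition

variable {m : Type*}

structure IsSupportedDecomposition (Fam : Finset (Finset m)) (M : Matrix m m ℝ)
    (A : Finset m → Matrix m m ℝ) (R : Matrix m m ℝ) : Prop where
  posSemidef : ∀ T ∈ Fam, (A T).PosSemidef
  supportedOn : ∀ T ∈ Fam, (A T).SupportedOn T
  posSemidef_rest : R.PosSemidef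
  sum_add_eq : (∑ T ∈ Fam, A T) + R = M

noncomputable def decompositionValue [Fintype m] (Fam : Finset (Finset m)) (d : Finset m → ℝ)
    (β : m → ℝ) (A : Finset m → Matrix m m ℝ) (R : Matrix m m ℝ) : ℝ :=
  β ⬝ᵥ R *ᵥ β + ∑ T ∈ Fam, (β ⬝ᵥ A T *ᵥ β) / d T

variable {Fam : Finset (Finset m)} {M : Matrix m m ℝ} {A : Finset m → Matrix m m ℝ}
  {R : Matrix m m ℝ}

theorem IsSupportedDecomposition.posSemidef_sub {T : Finset m}
    (h : IsSupportedDecomposition Fam M A R) (hT : T ∈ Fam) : (M - A T).PosSemidef := by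
  classical
  rw [← h.sum_add_eq, ← Finset.sum_erase_add Fam A hT, add_right_comm, add_sub_cancel_right]
  exact (posSemidef_sum _ fun T' hT' => h.posSemidef T' (Finset.mem_of_mem_erase hT')).add
    h.posSemidef_rest

theorem IsSupportedDecomposition.eq_sub_sum (h : IsSupportedDecomposition Fam M A R) :
    R = M - ∑ T ∈ Fam, A T :=
  eq_sub_of_add_eq' h.sum_add_eq

theorem IsSupportedDecomposition.congr {A' : Finset m → Matrix m m ℝ}
    (h : IsSupportedDecomposition Fam M A R) (hA' : ∀ T ∈ Fam, A' T = A T) :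
    IsSupportedDecomposition Fam M A' R where
  posSemidef T hT := hA' T hT ▸ h.posSemidef T hT
  supportedOn T hT := hA' T hT ▸ h.supportedOn T hT
  posSemidef_rest := h.posSemidef_rest
  sum_add_eq := Finset.sum_congr rfl hA' ▸ h.sum_add_eq

variable [Fintype m]

theorem decompositionValue_congr {A' : Finset m → Matrix m m ℝ}
    (d : Finset m → ℝ) (β : m → ℝ) (hA' : ∀ T ∈ Fam, A' T = A T) :
    decompositionValue Fam d β A' R = decompositionValue Fam d β A R := by
  unfold decompositionValue
  rw [Finset.sum_congr rfl fun T hT => by rw [hA' T hT]]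

theorem isClosed_setOf_isSupportedDecomposition (Fam : Finset (Finset m))
    (M : Matrix m m ℝ) :
    IsClosed {A : Finset m → Matrix m m ℝ |
      IsSupportedDecomposition Fam M A (M - ∑ T ∈ Fam, A T)} := by
  have hS : {A : Finset m → Matrix m m ℝ |
      IsSupportedDecomposition Fam M A (M - ∑ T ∈ Fam, A T)} =
      (↑Fam : Set (Finset m)).pi (fun T => {N | N.PosSemidef ∧ N.SupportedOn T}) ∩
        {A | (M - ∑ T ∈ Fam, A T).PosSemidef} := by
    ext A
    exact ⟨fun h => ⟨fun T hT => ⟨h.posSemidef T hT, h.supportedOn T hT⟩, h.posSemidef_rest⟩,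
      fun h => ⟨fun T hT => (h.1 T hT).1, fun T hT => (h.1 T hT).2, h.2, add_sub_cancel _ _⟩⟩
  rw [hS]
  exact (isClosed_set_pi fun T _ =>
    isClosed_setOf_posSemidef.inter (isClosed_setOf_supportedOn T)).inter
    (isClosed_setOf_posSemidef.preimage (by fun_prop))

theorem isCompact_setOf_isSupportedDecomposition (hM : M.PosSemidef)
    (Fam : Finset (Finset m)) :
    IsCompact {A : Finset m → Matrix m m ℝ |
      IsSupportedDecomposition Fam M A (M - ∑ T ∈ Fam, A T) ∧ ∀ T ∉ Fam, A T = 0} := by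
  refine (isCompact_univ_pi fun _ =>
    isCompact_setOf_posSemidef_and_posSemidef_sub M).of_isClosed_subset
    ((isClosed_setOf_isSupportedDecomposition Fam M).inter
      (isClosed_set_pi (i := (↑Fam : Set (Finset m))ᶜ) fun _ _ => isClosed_singleton)) ?_
  rintro A ⟨hA, hzero⟩ T -
  by_cases hT : T ∈ Fam
  · exact ⟨hA.posSemidef T hT, hA.posSemidef_sub hT⟩
  · rw [hzero T hT]
    exact ⟨.zero, by simpa using hM⟩

theorem exists_decompositionValue_maximal (hM : M.PosSemidef)
    (Fam : Finset (Finset m)) (d : Finset m → ℝ) (β : m → ℝ) :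
    ∃ (A : Finset m → Matrix m m ℝ) (R : Matrix m m ℝ), IsSupportedDecomposition Fam M A R ∧
      ∀ A' R', IsSupportedDecomposition Fam M A' R' →
        decompositionValue Fam d β A' R' ≤ decompositionValue Fam d β A R := by
  classical
  obtain ⟨A, ⟨hA, -⟩, hmax⟩ := (isCompact_setOf_isSupportedDecomposition hM Fam).exists_isMaxOn
    ⟨0, ⟨fun _ _ => .zero, fun _ _ _ _ _ => rfl, by simpa using hM, add_sub_cancel _ _⟩,
      fun _ _ => rfl⟩ (f := fun A => decompositionValue Fam d β A (M - ∑ T ∈ Fam, A T))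
    (by unfold decompositionValue; fun_prop)
  refine ⟨A, _, hA, fun A' R' h' => ?_⟩
  have hon (T) (hT : T ∈ Fam) : Fam.piecewise A' 0 T = A' T := Fam.piecewise_eq_of_mem _ _ hT
  have h'' := h'.congr hon
  rw [← decompositionValue_congr d β hon, h''.eq_sub_sum]
  exact hmax ⟨h''.eq_sub_sum ▸ h'', fun T hT => Fam.piecewise_eq_of_notMem _ _ hT⟩

theorem IsSupportedDecomposition.exists_rankOne (h : IsSupportedDecomposition Fam M A R)
    (d : Finset m → ℝ) (β : m → ℝ) :
    ∃ (c : Finset m → m → ℝ) (R₁ : Matrix m m ℝ),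
      IsSupportedDecomposition Fam M (fun T => vecMulVec (c T) (c T)) R₁ ∧
      decompositionValue Fam d β (fun T => vecMulVec (c T) (c T)) R₁ =
        decompositionValue Fam d β A R := by
  set c := fun T => rankOneFactor (A T) β
  have hquad (T) (hT : T ∈ Fam) : β ⬝ᵥ vecMulVec (c T) (c T) *ᵥ β = β ⬝ᵥ A T *ᵥ β :=
    (h.posSemidef T hT).dotProduct_vecMulVec_rankOneFactor β
  refine ⟨c, R + ∑ T ∈ Fam, (A T - vecMulVec (c T) (c T)), ⟨?_, ?_, ?_, ?_⟩, ?_⟩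
  · exact fun T _ => by simpa using posSemidef_vecMulVec_self_star (c T)
  · intro T hT i j hij
    have hrow (k : m) (hk : k ∉ T) : c T k = 0 :=
      rankOneFactor_apply_eq_zero β fun l => h.supportedOn T hT k l (Or.inl hk)
    rcases hij with hi | hj
    · simp [vecMulVec_apply, hrow i hi]
    · simp [vecMulVec_apply, hrow j hj]
  · exact h.posSemidef_rest.add (posSemidef_sum _ fun T hT =>
      (h.posSemidef T hT).posSemidef_sub_vecMulVec_rankOneFactor β)
  · rw [Finset.sum_sub_distrib, ← h.sum_add_eq]
    abel
  · have hrest : β ⬝ᵥ (R + ∑ T ∈ Fam, (A T - vecMulVec (c T) (c T))) *ᵥ β = β ⬝ᵥ R *ᵥ β := by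
      rw [add_mulVec, sum_mulVec, dotProduct_add, dotProduct_sum, add_eq_left]
      exact Finset.sum_eq_zero fun T hT => by rw [sub_mulVec, dotProduct_sub, hquad T hT, sub_self]
    rw [decompositionValue, decompositionValue, hrest]
    exact congrArg _ (Finset.sum_congr rfl fun T hT => by rw [hquad T hT])

end Decomposition

theorem stmt7_general {n p : ℕ} (X : Matrix (Fin n) (Fin p) ℝ) (lam : ℝ) (hlam : 0 ≤ lam)
    (Fam : Finset (Finset (Fin p)))
    (z β : Fin p → ℝ) :
    ∃ (A : Finset (Fin p) → Matrix (Fin p) (Fin p) ℝ)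
      (R : Matrix (Fin p) (Fin p) ℝ),
      (∀ T ∈ Fam, (A T).PosSemidef) ∧
      (∀ T ∈ Fam, ∀ i j, (i ∉ T ∨ j ∉ T) → A T i j = 0) ∧
      R.PosSemidef ∧
      ((∑ T ∈ Fam, A T) + R = Xᵀ * X + lam • 1) ∧
      (∀ T ∈ Fam, ∃ c : Fin p → ℝ, A T = Matrix.vecMulVec c c) ∧
      (∀ (A' : Finset (Fin p) → Matrix (Fin p) (Fin p) ℝ)
         (R' : Matrix (Fin p) (Fin p) ℝ),
        (∀ T ∈ Fam, (A' T).PosSemidef) →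
        (∀ T ∈ Fam, ∀ i j, (i ∉ T ∨ j ∉ T) → A' T i j = 0) →
        R'.PosSemidef →
        ((∑ T ∈ Fam, A' T) + R' = Xᵀ * X + lam • 1) →
        β ⬝ᵥ R'.mulVec β +
            ∑ T ∈ Fam, (β ⬝ᵥ (A' T).mulVec β) / min 1 (∑ i ∈ T, z i)
          ≤ β ⬝ᵥ R.mulVec β +
            ∑ T ∈ Fam, (β ⬝ᵥ (A T).mulVec β) / min 1 (∑ i ∈ T, z i)) := by
  have hM : (Xᵀ * X + lam • 1).PosSemidef := by
    simpa [conjTranspose_eq_transpose_of_trivial] using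
      (posSemidef_conjTranspose_mul_self X).add (PosSemidef.one.smul hlam)
  obtain ⟨A, R, hAR, hmax⟩ :=
    exists_decompositionValue_maximal hM Fam (fun T => min 1 (∑ i ∈ T, z i)) β
  obtain ⟨c, R₁, h₁, hvalue⟩ := hAR.exists_rankOne (fun T => min 1 (∑ i ∈ T, z i)) β
  refine ⟨fun T => vecMulVec (c T) (c T), R₁, h₁.posSemidef, h₁.supportedOn, h₁.posSemidef_rest,
    h₁.sum_add_eq, fun T _ => ⟨c T, rfl⟩, fun A' R' hA' hsupp hR' hsum => ?_⟩
  exact (hmax A' R' ⟨hA', hsupp, hR', hsum⟩).trans_eq hvalue.symm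

/-- if Fam is downward closed, the maximization defining φ_Fam(z,β) admits an
optimal PSD decomposition ∑_{T∈Fam} A_T + R = XᵀX + λI in which every A_T is rank-one,
i.e., A_T = c cᵀ for some vector c. -/
theorem stmt7 {n p : ℕ} (X : Matrix (Fin n) (Fin p) ℝ) (lam : ℝ) (hlam : 0 ≤ lam)
    (Fam : Finset (Finset (Fin p)))
    (hdc : ∀ V ∈ Fam, ∀ U ⊆ V, U ∈ Fam)
    (z β : Fin p → ℝ) (hz : ∀ i, 0 ≤ z i ∧ z i ≤ 1) :
    ∃ (A : Finset (Fin p) → Matrix (Fin p) (Fin p) ℝ)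
      (R : Matrix (Fin p) (Fin p) ℝ),
      (∀ T ∈ Fam, (A T).PosSemidef) ∧
      (∀ T ∈ Fam, ∀ i j, (i ∉ T ∨ j ∉ T) → A T i j = 0) ∧
      R.PosSemidef ∧
      ((∑ T ∈ Fam, A T) + R = Xᵀ * X + lam • 1) ∧
      (∀ T ∈ Fam, ∃ c : Fin p → ℝ, A T = Matrix.vecMulVec c c) ∧
      (∀ (A' : Finset (Fin p) → Matrix (Fin p) (Fin p) ℝ)
         (R' : Matrix (Fin p) (Fin p) ℝ),
        (∀ T ∈ Fam, (A' T).PosSemidef) →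
        (∀ T ∈ Fam, ∀ i j, (i ∉ T ∨ j ∉ T) → A' T i j = 0) →
        R'.PosSemidef →
        ((∑ T ∈ Fam, A' T) + R' = Xᵀ * X + lam • 1) →
        β ⬝ᵥ R'.mulVec β +
            ∑ T ∈ Fam, (β ⬝ᵥ (A' T).mulVec β) / min 1 (∑ i ∈ T, z i)
          ≤ β ⬝ᵥ R.mulVec β +
            ∑ T ∈ Fam, (β ⬝ᵥ (A T).mulVec β) / min 1 (∑ i ∈ T, z i)) :=
  stmt7_general X lam hlam Fam z β
end

section
/- Let Λ be symmetric diagonally dominant with nonnegative diagonal, z ∈ {0,1}^p, β ∈ ℝ^p with β_i(1−z_i) = 0 for all i, and t ∈ ℝ. Then t ≥ βᵀΛβ if and only if t ≥ ∑_i (Λ_ii − ∑_{j≠i}|Λ_ij|) β_i²/z_i + ∑_{i<j} |Λ_ij| (β_i + sign(Λ_ij)β_j)² / min{1, z_i + z_j}, with the conventions 0/0 = 0 and s/0 = ∞ for s > 0. -/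
open Matrix BigOperators

/-- on the binary feasible set (z binary, β_i(1−z_i)=0) the epigraph
inequality t ≥ βᵀΛβ for a symmetric diagonally dominant Λ is equivalent to its
perspective/rank-one strengthened form (conventions 0/0 = 0; the case s/0 = ∞ never
occurs on the feasible set, so Lean's division agrees with the conventions). -/
theorem stmt13 {p : ℕ} (Λ : Matrix (Fin p) (Fin p) ℝ) (hsym : Λ.IsSymm)
    (hdd : ∀ i, ∑ j ∈ Finset.univ.erase i, |Λ i j| ≤ Λ i i)
    (z β : Fin p → ℝ) (hz : ∀ i, z i = 0 ∨ z i = 1)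
    (hc : ∀ i, β i * (1 - z i) = 0) (t : ℝ) :
    (β ⬝ᵥ Λ.mulVec β ≤ t) ↔
      (∑ i, (Λ i i - ∑ j ∈ Finset.univ.erase i, |Λ i j|) * (β i) ^ 2 / z i +
        ∑ i, ∑ j ∈ Finset.univ.filter (fun j => i < j),
          |Λ i j| * (β i + Real.sign (Λ i j) * β j) ^ 2 / min 1 (z i + z j)) ≤ t := by
  have hb : ∀ i, z i = 0 → β i = 0 := by
    intro i h
    have := hc i
    rw [h] at this
    linarith
  have h1 : ∀ i, (Λ i i - ∑ j ∈ Finset.univ.erase i, |Λ i j|) * (β i) ^ 2 / z i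
      = (Λ i i - ∑ j ∈ Finset.univ.erase i, |Λ i j|) * (β i) ^ 2 := by
    intro i
    rcases hz i with h | h
    · simp [h, hb i h]
    · rw [h, div_one]
  have h2 : ∀ i j, |Λ i j| * (β i + Real.sign (Λ i j) * β j) ^ 2 / min 1 (z i + z j)
      = |Λ i j| * (β i + Real.sign (Λ i j) * β j) ^ 2 := by
    intro i j
    rcases hz i with hi | hi
    · rcases hz j with hj | hj
      · simp [hb i hi, hb j hj]
      · have : min 1 (z i + z j) = 1 := by rw [hi, hj]; norm_num
        rw [this, div_one]
    · have : min 1 (z i + z j) = 1 := by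
        rcases hz j with hj | hj <;> rw [hi, hj] <;> norm_num
      rw [this, div_one]
  simp_rw [h1, h2]
  have key : β ⬝ᵥ Λ.mulVec β
      = ∑ i, (Λ i i - ∑ j ∈ Finset.univ.erase i, |Λ i j|) * (β i) ^ 2 +
        ∑ i, ∑ j ∈ Finset.univ.filter (fun j => i < j),
          |Λ i j| * (β i + Real.sign (Λ i j) * β j) ^ 2 := by
    set G : Fin p → Fin p → ℝ := fun i j => |Λ i j| * β i ^ 2 + Λ i j * β i * β j with hG
    clear_value G
    have swap : ∀ H : Fin p → Fin p → ℝ,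
        ∑ i, ∑ j ∈ Finset.univ.filter (fun j => j < i), H i j
          = ∑ i, ∑ j ∈ Finset.univ.filter (fun j => i < j), H j i := by
      intro H
      simp_rw [Finset.sum_filter]
      exact Finset.sum_comm
    have expand : ∀ i j, |Λ i j| * (β i + Real.sign (Λ i j) * β j) ^ 2 = G i j + G j i := by
      intro i j
      have hji : Λ j i = Λ i j := hsym.apply i j
      rcases lt_trichotomy (Λ i j) 0 with h | h | h
      · simp only [hG, hji, Real.sign_of_neg h, abs_of_neg h]
        ring
      · simp [hG, hji, h]
      · simp only [hG, hji, Real.sign_of_pos h, abs_of_pos h]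
        ring
    have split_erase : ∀ i, ∑ j ∈ Finset.univ.erase i, G i j
        = ∑ j ∈ Finset.univ.filter (fun j => j < i), G i j
          + ∑ j ∈ Finset.univ.filter (fun j => i < j), G i j := by
      intro i
      have hunion : Finset.univ.erase i =
          (Finset.univ.filter (fun j => j < i)) ∪ (Finset.univ.filter (fun j => i < j)) := by
        ext j
        simp only [Finset.mem_erase, Finset.mem_union, Finset.mem_filter, Finset.mem_univ,
          true_and, and_true]
        constructor
        · intro h; exact lt_or_gt_of_ne h
        · rintro (h | h)
          · exact ne_of_lt h
          · exact ne_of_gt h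
      rw [hunion, Finset.sum_union]
      rw [Finset.disjoint_filter]
      intro x _ hx
      omega
    have step : ∑ i, ∑ j ∈ Finset.univ.filter (fun j => i < j),
        |Λ i j| * (β i + Real.sign (Λ i j) * β j) ^ 2
        = ∑ i, ∑ j ∈ Finset.univ.erase i, G i j := by
      simp_rw [expand, Finset.sum_add_distrib, split_erase]
      rw [Finset.sum_add_distrib, swap G]
      ring
    rw [step]
    simp only [dotProduct, Matrix.mulVec]
    rw [← Finset.sum_add_distrib]
    apply Finset.sum_congr rfl
    intro i _
    have h4 : (∑ j, Λ i j * β j) = Λ i i * β i + ∑ j ∈ Finset.univ.erase i, Λ i j * β j :=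
      (Finset.add_sum_erase _ _ (Finset.mem_univ i)).symm
    have h5 : ∑ j ∈ Finset.univ.erase i, G i j
        = (∑ j ∈ Finset.univ.erase i, |Λ i j|) * β i ^ 2
          + β i * ∑ j ∈ Finset.univ.erase i, Λ i j * β j := by
      simp only [hG]
      rw [Finset.sum_add_distrib, Finset.sum_mul, Finset.mul_sum]
      congr 1
      apply Finset.sum_congr rfl
      intro j _
      ring
    rw [h4, h5]
    ring
  rw [key]
end
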